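/- arXiv:math-ph/0206021 — 3 statements merged into one kernel-verified Lean document; each statement's English description precedes it below -/
import Mathlib

section
/- For any square complex matrices c, M, N of the same size, |tr(c† M c N†)| ≤ (1/2)(tr(c_L M c_L M†) + tr(c_R N c_R N†)), where c_L = √(c c†) and c_R = √(c† c) are the unique positive semidefinite square roots. -/
open Matrix
open scoped ComplexOrder
open scoped MatrixOrder

namespace TraceIneqAux

variable {n : Type*} [Fintype n] [DecidableEq n]

private lemma contOn (A : Matrix n n ℂ) (f : ℝ → ℝ) : ContinuousOn f (spectrum ℝ A) := by
  rw [continuousOn_iff_continuous_restrict]; fun_prop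

private lemma trace_self_conj_nonneg (B : Matrix n n ℂ) : 0 ≤ (Matrix.trace (B * Bᴴ)).re := by
  have : Matrix.trace (B * Bᴴ) = ∑ i, ∑ j, B i j * star (B i j) := by
    simp [Matrix.trace, Matrix.diag, Matrix.mul_apply, Matrix.conjTranspose_apply]
  rw [this, Complex.re_sum]
  refine Finset.sum_nonneg fun i _ => ?_
  rw [Complex.re_sum]
  refine Finset.sum_nonneg fun j _ => ?_
  simp [Complex.star_def, Complex.mul_conj]
  exact Complex.normSq_nonneg _

private lemma tcyc (P M' Q Rr N' S : Matrix n n ℂ) :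
    Matrix.trace (P * M' * Q * (Rr * N' * S)) =
      Matrix.trace (M' * (Q * Rr) * N' * (S * P)) := by
  rw [show P * M' * Q * (Rr * N' * S) = P * (M' * Q * (Rr * N' * S)) by
    simp only [Matrix.mul_assoc], Matrix.trace_mul_comm]
  simp only [Matrix.mul_assoc]

set_option maxHeartbeats 1000000 in
/-- Key real-part inequality. -/
private lemma key (c M N : Matrix n n ℂ) :
    0 ≤ (Matrix.trace (CFC.sqrt (c * cᴴ) * M *
          CFC.sqrt (c * cᴴ) * Mᴴ)).re +
        (Matrix.trace (CFC.sqrt (cᴴ * c) * N *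
          CFC.sqrt (cᴴ * c) * Nᴴ)).re +
        2 * (Matrix.trace (cᴴ * M * c * Nᴴ)).re := by
  set A : Matrix n n ℂ := cᴴ * c with hA_def
  have hApsd : A.PosSemidef := Matrix.posSemidef_conjTranspose_mul_self c
  have hA : IsSelfAdjoint A := hApsd.isHermitian
  have hspec : ∀ x ∈ spectrum ℝ A, 0 ≤ x := by
    intro x hx
    rw [hApsd.1.spectrum_real_eq_range_eigenvalues] at hx
    obtain ⟨i, rfl⟩ := hx
    exact hApsd.eigenvalues_nonneg i
  have cfcmul : ∀ f g : ℝ → ℝ, cfc f A * cfc g A = cfc (fun x => f x * g x) A :=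
    fun f g => (cfc_mul f g A (contOn A f) (contOn A g)).symm
  have herm : ∀ f : ℝ → ℝ, (cfc f A)ᴴ = cfc f A := fun f =>
    (cfc_predicate f A : IsSelfAdjoint _).star_eq
  -- the quarter-root function and friends
  set q : ℝ → ℝ := fun x => Real.sqrt (Real.sqrt x) with hq
  set h : ℝ → ℝ := fun x => (q x)⁻¹ with hh
  set R₀ : Matrix n n ℂ := cfc q A with hR₀
  set E : Matrix n n ℂ := cfc h A with hE
  set P : Matrix n n ℂ := cfc (fun x => h x * q x) A with hP
  set D : Matrix n n ℂ := c * E with hD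
  have hqq : ∀ x, q x * q x = Real.sqrt x :=
    fun x => Real.mul_self_sqrt (Real.sqrt_nonneg x)
  -- projection facts
  have hid : ∀ x ∈ spectrum ℝ A, x * (h x * q x) = x := by
    intro x hx
    rcases lt_or_eq_of_le (hspec x hx) with hx' | hx'
    · have hqx : q x ≠ 0 := by simp only [hq]; positivity
      simp [hh, inv_mul_cancel₀ hqx]
    · simp [hh, ← hx']
  have hAP : A * P = A := by
    have step : cfc (fun x => x * (h x * q x)) A = A * P := by
      rw [cfc_mul (fun x : ℝ => x) (fun x => h x * q x) A (contOn A _) (contOn A _),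
        cfc_id' ℝ A, ← hP]
    rw [← step]
    exact (cfc_congr hid).trans (cfc_id' ℝ A)
  have hPA : P * A = A := by
    have step : cfc (fun x => (h x * q x) * x) A = P * A := by
      rw [cfc_mul (fun x => h x * q x) (fun x : ℝ => x) A (contOn A _) (contOn A _),
        cfc_id' ℝ A, ← hP]
    rw [← step]
    refine (cfc_congr ?_).trans (cfc_id' ℝ A)
    intro x hx
    show h x * q x * x = x
    rw [mul_comm]
    exact hid x hx
  have hcP : c * P = c := by
    have hPherm : Pᴴ = P := herm _
    have expand : (c * P - c)ᴴ * (c * P - c)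
        = P * (A * P) - P * A - (A * P - A) := by
      rw [Matrix.conjTranspose_sub, Matrix.conjTranspose_mul, hPherm]
      simp only [Matrix.sub_mul, Matrix.mul_sub, hA_def]
      simp only [Matrix.mul_assoc]
      abel
    rw [hAP, hPA] at expand
    simp only [sub_self, sub_zero, sub_self] at expand
    have := Matrix.conjTranspose_mul_self_eq_zero.mp expand
    exact sub_eq_zero.mp this
  -- R₀ * R₀ = c_R
  have hsqrtA : CFC.sqrt (cᴴ * c) = cfc Real.sqrt A := by
    have hpsd : (cfc Real.sqrt A).PosSemidef := by
      have h1 : cfc Real.sqrt A = (cfc q A)ᴴ * cfc q A := by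
        rw [herm, cfcmul]
        exact (cfc_congr fun x _ => (hqq x).symm)
      rw [h1]
      exact Matrix.posSemidef_conjTranspose_mul_self _
    refine CFC.sqrt_unique ?_ hpsd.nonneg
    rw [cfcmul]
    have : cfc (fun x => Real.sqrt x * Real.sqrt x) A = cfc (fun x : ℝ => x) A :=
      cfc_congr fun x hx => Real.mul_self_sqrt (hspec x hx)
    rw [this, cfc_id' ℝ A]
  have hRR : R₀ * R₀ = CFC.sqrt (cᴴ * c) := by
    rw [hsqrtA, hR₀, cfcmul]
    exact cfc_congr fun x _ => hqq x
  -- D * R₀ = c, R₀ * Dᴴ = cᴴ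
  have hDR : D * R₀ = c := by
    rw [hD, hR₀, hE, Matrix.mul_assoc, cfcmul, ← hP, hcP]
  have hR₀herm : R₀ᴴ = R₀ := by rw [hR₀]; exact herm q
  have hRD : R₀ * Dᴴ = cᴴ := by
    have h1 : R₀ * Dᴴ = (D * R₀)ᴴ := by
      conv_rhs => rw [Matrix.conjTranspose_mul]
      rw [hR₀herm]
    rw [h1, hDR]
  -- D * Dᴴ = c_L
  have hDDh : D * Dᴴ = CFC.sqrt (c * cᴴ) := by
    have hEherm : Eᴴ = E := by rw [hE]; exact herm h
    have hX : D * Dᴴ = c * cfc (fun x => h x * h x) A * cᴴ := by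
      rw [hD, Matrix.conjTranspose_mul, hEherm, hE, ← cfcmul]
      simp only [Matrix.mul_assoc]
    have step1 : cfc (fun x => x * (h x * h x)) A = A * cfc (fun x => h x * h x) A := by
      rw [cfc_mul (fun x : ℝ => x) (fun x => h x * h x) A (contOn A _) (contOn A _),
        cfc_id' ℝ A]
    have step2 : cfc (fun x => (h x * h x) * (x * (h x * h x))) A
        = cfc (fun x => h x * h x) A * (A * cfc (fun x => h x * h x) A) := by
      rw [cfc_mul (fun x => h x * h x) (fun x => x * (h x * h x)) A (contOn A _) (contOn A _),
        step1]
    have hmid : cfc (fun x => h x * h x) A * (A * cfc (fun x => h x * h x) A) = P := by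
      rw [← step2, hP]
      apply cfc_congr
      intro x hx
      rcases lt_or_eq_of_le (hspec x hx) with hx' | hx'
      · have hqx : q x ≠ 0 := by simp only [hq]; positivity
        have hq2 : q x * q x = Real.sqrt x := hqq x
        have hxs : Real.sqrt x * Real.sqrt x = x := Real.mul_self_sqrt (le_of_lt hx')
        have hqq4 : q x * q x * (q x * q x) = x := by rw [hq2]; exact hxs
        simp only [hh]
        field_simp
        nlinarith [hqq4]
      · simp [hh, hq, ← hx']
    have hXX : (D * Dᴴ) ^ 2 = c * cᴴ := by
      rw [pow_two, hX]
      have hassoc : c * cfc (fun x => h x * h x) A * cᴴ * (c * cfc (fun x => h x * h x) A * cᴴ)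
          = c * (cfc (fun x => h x * h x) A * ((cᴴ * c) * cfc (fun x => h x * h x) A)) * cᴴ := by
        simp only [Matrix.mul_assoc]
      rw [hassoc, ← hA_def, hmid, hcP]
    exact (CFC.sqrt_unique ((pow_two _).symm.trans hXX)
      (Matrix.posSemidef_self_mul_conjTranspose D).nonneg).symm
  clear_value P E
  -- now the main computation
  clear_value R₀ D
  set H : Matrix n n ℂ := Dᴴ * M * D + R₀ * N * R₀ with hH
  have htr : 0 ≤ (Matrix.trace (H * Hᴴ)).re := trace_self_conj_nonneg H
  have hHconj : Hᴴ = Dᴴ * Mᴴ * D + R₀ * Nᴴ * R₀ := by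
    rw [hH]
    simp only [Matrix.conjTranspose_add, Matrix.conjTranspose_mul,
      Matrix.conjTranspose_conjTranspose, hR₀herm, Matrix.mul_assoc]
  have hexp : Matrix.trace (H * Hᴴ) =
      Matrix.trace (Dᴴ * M * D * (Dᴴ * Mᴴ * D)) + Matrix.trace (Dᴴ * M * D * (R₀ * Nᴴ * R₀)) +
      Matrix.trace (R₀ * N * R₀ * (Dᴴ * Mᴴ * D)) +
      Matrix.trace (R₀ * N * R₀ * (R₀ * Nᴴ * R₀)) := by
    rw [hHconj, hH]
    simp only [Matrix.add_mul, Matrix.mul_add, Matrix.trace_add]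
    ring
  have ta : Matrix.trace (Dᴴ * M * D * (Dᴴ * Mᴴ * D)) =
      Matrix.trace (CFC.sqrt (c * cᴴ) * M *
        CFC.sqrt (c * cᴴ) * Mᴴ) := by
    rw [tcyc, hDDh, Matrix.trace_mul_comm]
    simp only [Matrix.mul_assoc]
  have tb : Matrix.trace (Dᴴ * M * D * (R₀ * Nᴴ * R₀)) =
      Matrix.trace (cᴴ * M * c * Nᴴ) := by
    rw [tcyc, hDR, hRD, Matrix.trace_mul_comm]
    simp only [Matrix.mul_assoc]
  have tc : Matrix.trace (R₀ * N * R₀ * (Dᴴ * Mᴴ * D)) =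
      star (Matrix.trace (cᴴ * M * c * Nᴴ)) := by
    rw [tcyc, hRD, hDR, ← Matrix.trace_conjTranspose]
    simp only [Matrix.conjTranspose_mul, Matrix.conjTranspose_conjTranspose, Matrix.mul_assoc]
  have td : Matrix.trace (R₀ * N * R₀ * (R₀ * Nᴴ * R₀)) =
      Matrix.trace (CFC.sqrt (cᴴ * c) * N *
        CFC.sqrt (cᴴ * c) * Nᴴ) := by
    rw [tcyc, hRR, Matrix.trace_mul_comm]
    simp only [Matrix.mul_assoc]
  rw [hexp, ta, tb, tc, td] at htr
  simp only [Complex.add_re, Complex.star_def, Complex.conj_re] at htr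
  linarith

end TraceIneqAux

/-- Trace inequality: for square complex matrices `c`, `M`, `N`,
`|tr(cᴴ M c Nᴴ)| ≤ (1/2)(tr(c_L M c_L Mᴴ) + tr(c_R N c_R Nᴴ))`,
where `c_L = √(c cᴴ)` and `c_R = √(cᴴ c)`. -/
theorem trace_inequality {n : Type*} [Fintype n] [DecidableEq n]
    (c M N : Matrix n n ℂ) :
    ‖Matrix.trace (cᴴ * M * c * Nᴴ)‖ ≤
      (1/2) * ((Matrix.trace (CFC.sqrt (c * cᴴ) * M *
          CFC.sqrt (c * cᴴ) * Mᴴ)).re +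
        (Matrix.trace (CFC.sqrt (cᴴ * c) * N *
          CFC.sqrt (cᴴ * c) * Nᴴ)).re) := by
  set t : ℂ := Matrix.trace (cᴴ * M * c * Nᴴ) with ht
  set φ : ℂ := if t = 0 then 1 else -(‖t‖ : ℂ) / t with hφ
  have hφt : φ * t = -(‖t‖ : ℂ) := by
    rw [hφ]; split_ifs with h0
    · simp [h0]
    · field_simp
  have hφφ : φ * star φ = 1 := by
    have habs : ‖φ‖ = 1 := by
      rw [hφ]; split_ifs with h0
      · simp
      · rw [norm_div, norm_neg, Complex.norm_real, norm_norm, div_self]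
        exact (norm_ne_zero_iff.mpr h0)
    rw [Complex.star_def, Complex.mul_conj, Complex.normSq_eq_norm_sq, habs]
    norm_num
  have h := TraceIneqAux.key c (φ • M) N
  have e1 : Matrix.trace (CFC.sqrt (c * cᴴ) * (φ • M) *
        CFC.sqrt (c * cᴴ) * (φ • M)ᴴ)
      = (φ * star φ) * Matrix.trace (CFC.sqrt (c * cᴴ) * M *
        CFC.sqrt (c * cᴴ) * Mᴴ) := by
    rw [Matrix.conjTranspose_smul]
    simp only [Matrix.mul_smul, Matrix.smul_mul, smul_smul, Matrix.trace_smul, smul_eq_mul]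
    ring
  have e2 : Matrix.trace (cᴴ * (φ • M) * c * Nᴴ) = φ * t := by
    rw [ht]
    simp only [Matrix.mul_smul, Matrix.smul_mul, Matrix.trace_smul, smul_eq_mul]
  rw [e1, hφφ, one_mul, e2, hφt] at h
  simp only [Complex.neg_re, Complex.ofReal_re] at h
  linarith
end

section
/- If c is a complex square matrix with c^T = c or c^T = -c, then (√(c†c))^T = √(cc†). -/
open Matrix
open scoped ComplexOrder

namespace Matrix.PosSemidef

/-- The positive semidefinite square root of a positive semidefinite matrix
(the definition of `Matrix.PosSemidef.sqrt` in the older Mathlib, since removed). -/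
noncomputable def sqrt {n 𝕜 : Type*} [Fintype n] [RCLike 𝕜] [DecidableEq n]
    {A : Matrix n n 𝕜} (hA : A.PosSemidef) : Matrix n n 𝕜 :=
  hA.1.eigenvectorUnitary.1 * diagonal ((↑) ∘ Real.sqrt ∘ hA.1.eigenvalues) *
    (star hA.1.eigenvectorUnitary : Matrix n n 𝕜)

end Matrix.PosSemidef

section PortHelpers

open scoped MatrixOrder

lemma Matrix.PosSemidef.sqrt_eq_cfcSqrt {n 𝕜 : Type*} [Fintype n] [RCLike 𝕜] [DecidableEq n]
    {A : Matrix n n 𝕜} (hA : A.PosSemidef) : hA.sqrt = CFC.sqrt A := by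
  rw [CFC.sqrt_eq_cfc, cfc_nnreal_eq_real _ A, hA.1.cfc_eq]
  simp only [IsHermitian.cfc, Matrix.PosSemidef.sqrt, Unitary.conjStarAlgAut_apply]
  congr 3
  funext i
  simp [Real.coe_sqrt, Real.coe_toNNReal', max_eq_left (hA.eigenvalues_nonneg i)]

lemma Matrix.PosSemidef.posSemidef_sqrt {n 𝕜 : Type*} [Fintype n] [RCLike 𝕜] [DecidableEq n]
    {A : Matrix n n 𝕜} (hA : A.PosSemidef) : hA.sqrt.PosSemidef := by
  rw [hA.sqrt_eq_cfcSqrt]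
  exact (CFC.sqrt_nonneg A).posSemidef

lemma Matrix.PosSemidef.sq_sqrt {n 𝕜 : Type*} [Fintype n] [RCLike 𝕜] [DecidableEq n]
    {A : Matrix n n 𝕜} (hA : A.PosSemidef) : hA.sqrt ^ 2 = A := by
  rw [hA.sqrt_eq_cfcSqrt]
  exact CFC.sq_sqrt A hA.nonneg

lemma Matrix.PosSemidef.eq_sqrt_of_sq_eq {n 𝕜 : Type*} [Fintype n] [RCLike 𝕜] [DecidableEq n]
    {A : Matrix n n 𝕜} (hA : A.PosSemidef) (B : Matrix n n 𝕜) (hAB : A ^ 2 = B)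
    {hB : B.PosSemidef} : A = hB.sqrt := by
  rw [hB.sqrt_eq_cfcSqrt, ← hAB, CFC.sqrt_sq A hA.nonneg]

end PortHelpers

/-- If `cᵀ = c` or `cᵀ = -c`, then `(√(cᴴ c))ᵀ = √(c cᴴ)`. -/
theorem transpose_sqrt_conjTranspose_mul_self {n : Type*} [Fintype n] [DecidableEq n]
    (c : Matrix n n ℂ) (h : cᵀ = c ∨ cᵀ = -c) :
    ((Matrix.posSemidef_conjTranspose_mul_self c).sqrt)ᵀ =
      (Matrix.posSemidef_self_mul_conjTranspose c).sqrt := by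
  have hM := Matrix.posSemidef_conjTranspose_mul_self c
  refine Matrix.PosSemidef.eq_sqrt_of_sq_eq hM.posSemidef_sqrt.transpose _ ?_
  have hsq : (hM.sqrtᵀ) ^ 2 = (cᴴ * c)ᵀ := by
    rw [pow_two, ← transpose_mul, ← pow_two, hM.sq_sqrt]
  rw [hsq, transpose_mul, show cᴴᵀ = cᵀᴴ by ext i j; simp]
  rcases h with h | h <;> rw [h] <;> simp
end

section
/- For a half-integer j and integer m with -j ≤ m ≤ j, -(2j+1)·binom(2j, j+m)·∫₀¹ p^{j+m}(1-p)^{j-m} ln(p) dp = Σ_{n=0}^{j-m} 1/(2j+1-n). -/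
open Real MeasureTheory intervalIntegral Set

lemma wehrl_intInt (a b : ℕ) :
    IntervalIntegrable (fun p : ℝ => p ^ a * (1 - p) ^ b * Real.log p) volume 0 1 := by
  have hg : IntervalIntegrable (fun p : ℝ => 2 * p ^ (-(1/2) : ℝ)) volume 0 1 :=
    (intervalIntegrable_rpow' (by norm_num)).const_mul 2
  apply hg.mono_fun
  · exact (((measurable_id.pow_const a).mul
      ((measurable_const.sub measurable_id).pow_const b)).mul
      Real.measurable_log).aestronglyMeasurable
  · rw [Set.uIoc_of_le (by norm_num : (0:ℝ) ≤ 1)]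
    filter_upwards [ae_restrict_mem measurableSet_Ioc] with x hx
    obtain ⟨hx0, hx1⟩ := hx
    have h1 : |Real.log x| ≤ 2 * x ^ (-(1/2) : ℝ) := by
      rw [abs_of_nonpos (Real.log_nonpos hx0.le hx1), ← Real.log_inv]
      calc Real.log x⁻¹ ≤ (x⁻¹) ^ (1/2 : ℝ) / (1/2) :=
            Real.log_le_rpow_div (by positivity) (by norm_num)
        _ = 2 * x ^ (-(1/2) : ℝ) := by
            rw [← Real.rpow_neg_one x, ← Real.rpow_mul hx0.le]
            norm_num; ring
    have hb : |x ^ a * (1 - x) ^ b| ≤ 1 := by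
      rw [abs_mul, abs_pow, abs_pow]
      have h2 : |x| ≤ 1 := abs_le.2 ⟨by linarith, hx1⟩
      have h3 : |1 - x| ≤ 1 := abs_le.2 ⟨by linarith, by linarith⟩
      calc |x| ^ a * |1 - x| ^ b ≤ 1 ^ a * 1 ^ b := by
            gcongr
        _ = 1 := by norm_num
    have hxr : (0:ℝ) < x ^ (-(1/2):ℝ) := Real.rpow_pos_of_pos hx0 _
    calc ‖x ^ a * (1 - x) ^ b * Real.log x‖ = |x ^ a * (1 - x) ^ b| * |Real.log x| := by
          rw [norm_mul]; rfl
      _ ≤ 1 * (2 * x ^ (-(1/2):ℝ)) := by gcongr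
      _ ≤ ‖2 * x ^ (-(1/2):ℝ)‖ := by rw [one_mul]; exact le_abs_self _

lemma wehrl_contOn (a : ℕ) :
    ContinuousOn (fun p : ℝ => p ^ (a + 1) * Real.log p) (Icc 0 1) := by
  intro x hx
  rcases eq_or_ne x 0 with rfl | hx0
  · apply ContinuousWithinAt.mono _ Icc_subset_Ici_self
    rw [← continuousWithinAt_Ioi_iff_Ici]
    have h := tendsto_log_mul_rpow_nhdsGT_zero (r := (a + 1 : ℝ)) (by positivity)
    unfold ContinuousWithinAt
    simp only [Real.log_zero, mul_zero, zero_pow (Nat.succ_ne_zero a), zero_mul]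
    apply Filter.Tendsto.congr' _ h
    filter_upwards [self_mem_nhdsWithin] with y (hy : y ∈ Ioi (0:ℝ))
    rw [mul_comm, ← Real.rpow_natCast y (a+1)]
    push_cast
    ring_nf
  · exact ((continuous_pow (a+1)).continuousAt.mul
      (Real.continuousAt_log hx0)).continuousWithinAt

lemma wehrl_beta_base (a : ℕ) :
    (∫ p in (0:ℝ)..1, p ^ a * (1 - p) ^ 0) = 1 / ((a:ℝ) + 1) := by
  simp only [pow_zero, mul_one]
  rw [integral_pow]
  norm_num

lemma wehrl_beta_rec (a b : ℕ) :
    ((a:ℝ) + 1) * ∫ p in (0:ℝ)..1, p ^ a * (1 - p) ^ (b+1) =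
      ((b:ℝ) + 1) * ∫ p in (0:ℝ)..1, p ^ (a+1) * (1 - p) ^ b := by
  have key : (∫ x in (0:ℝ)..1, (((a:ℝ)+1) * (x ^ a * (1-x)^(b+1)) -
      ((b:ℝ)+1) * (x ^ (a+1) * (1-x)^b))) = 0 := by
    rw [intervalIntegral.integral_eq_sub_of_hasDerivAt (f := fun p : ℝ => p^(a+1)*(1-p)^(b+1))]
    · norm_num
    · intro x _
      have h1 : HasDerivAt (fun p : ℝ => (1 - p) ^ (b+1))
          (((b:ℝ)+1) * (1-x)^b * (-1)) x := by
        have := ((hasDerivAt_id x).const_sub 1).fun_pow (b+1)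
        simpa using this
      have := (hasDerivAt_pow (a+1) x).fun_mul h1
      refine this.congr_deriv ?_
      push_cast
      ring
    · apply Continuous.intervalIntegrable
      fun_prop
  rw [intervalIntegral.integral_sub, intervalIntegral.integral_const_mul,
    intervalIntegral.integral_const_mul] at key
  · linarith
  · exact (Continuous.intervalIntegrable (by fun_prop) _ _)
  · exact (Continuous.intervalIntegrable (by fun_prop) _ _)

lemma wehrl_beta_val (b : ℕ) : ∀ a : ℕ,
    ((a + b + 1 : ℕ) : ℝ) * ((a + b).choose a : ℝ) *
      ∫ p in (0:ℝ)..1, p ^ a * (1 - p) ^ b = 1 := by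
  induction b with
  | zero =>
    intro a
    rw [wehrl_beta_base]
    simp only [Nat.add_zero, Nat.choose_self, Nat.cast_one, mul_one]
    push_cast
    field_simp
  | succ b ih =>
    intro a
    have ha : ((a:ℝ) + 1) ≠ 0 := by positivity
    have hrec := wehrl_beta_rec a b
    have hih := ih (a + 1)
    have hn := Nat.choose_succ_right_eq (a + b + 1) a
    rw [show a + b + 1 - a = b + 1 from by omega] at hn
    have hnR : ((a+b+1).choose (a+1) : ℝ) * ((a:ℝ)+1) =
        ((a+b+1).choose a : ℝ) * ((b:ℝ)+1) := by exact_mod_cast hn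
    rw [show a + (b+1) + 1 = a + b + 1 + 1 from by omega,
      show a + (b+1) = a + b + 1 from by omega]
    rw [show a + 1 + b + 1 = a + b + 1 + 1 from by omega,
      show a + 1 + b = a + b + 1 from by omega] at hih
    have hI1 : (∫ p in (0:ℝ)..1, p ^ a * (1 - p) ^ (b+1)) =
        ((b:ℝ)+1) * (∫ p in (0:ℝ)..1, p ^ (a+1) * (1 - p) ^ b) / ((a:ℝ)+1) := by
      field_simp
      linarith [hrec]
    rw [hI1]
    push_cast at hih ⊢
    field_simp
    linear_combination ((a:ℝ)+1) * hih -
      (((a:ℝ)+(b:ℝ)+2) * (∫ p in (0:ℝ)..1, p^(a+1)*(1-p)^b)) * hnR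

lemma wehrl_I_base (a : ℕ) :
    ((a:ℝ) + 1) * ∫ p in (0:ℝ)..1, p ^ a * (1 - p) ^ 0 * Real.log p
      = -(1 / ((a:ℝ) + 1)) := by
  have ha : ((a:ℝ) + 1) ≠ 0 := by positivity
  have hcont : ContinuousOn (fun p : ℝ => p ^ (a+1) * Real.log p - p ^ (a+1) / ((a:ℝ)+1))
      (Icc 0 1) :=
    (wehrl_contOn a).sub ((continuous_pow (a+1)).continuousOn.div_const _)
  have hderiv : ∀ x ∈ Ioo (0:ℝ) 1,
      HasDerivWithinAt (fun p : ℝ => p ^ (a+1) * Real.log p - p ^ (a+1) / ((a:ℝ)+1))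
        (((a:ℝ)+1) * (x ^ a * (1 - x) ^ 0 * Real.log x)) (Ioi x) x := by
    intro x hx
    have hx0 : x ≠ 0 := ne_of_gt hx.1
    have h1 : HasDerivAt (fun p : ℝ => p ^ (a+1) * Real.log p)
        (((a:ℝ)+1) * x ^ a * Real.log x + x ^ (a+1) * x⁻¹) x := by
      have := (hasDerivAt_pow (a+1) x).fun_mul (Real.hasDerivAt_log hx0)
      simpa using this
    have h2 : HasDerivAt (fun p : ℝ => p ^ (a+1) / ((a:ℝ)+1))
        (((a:ℝ)+1) * x ^ a / ((a:ℝ)+1)) x := by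
      have := (hasDerivAt_pow (a+1) x).div_const ((a:ℝ)+1)
      simpa using this
    apply HasDerivAt.hasDerivWithinAt
    have h3 := h1.fun_sub h2
    convert h3 using 1
    rw [pow_succ]
    field_simp
    ring
  have hint : IntervalIntegrable
      (fun x : ℝ => ((a:ℝ)+1) * (x ^ a * (1 - x) ^ 0 * Real.log x)) volume 0 1 :=
    (wehrl_intInt a 0).const_mul _
  have key := intervalIntegral.integral_eq_sub_of_hasDeriv_right_of_le
    (by norm_num : (0:ℝ) ≤ 1) hcont hderiv hint
  simp only [pow_zero, mul_one] at key ⊢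
  rw [intervalIntegral.integral_const_mul] at key
  rw [key]
  norm_num

lemma wehrl_I_rec (a b : ℕ) :
    ((a:ℝ)+1) * ∫ p in (0:ℝ)..1, p ^ a * (1-p) ^ (b+1) * Real.log p
      = ((b:ℝ)+1) * (∫ p in (0:ℝ)..1, p ^ (a+1) * (1-p) ^ b * Real.log p)
        - ∫ p in (0:ℝ)..1, p ^ a * (1-p) ^ (b+1) := by
  have hi1 := (wehrl_intInt a (b+1)).const_mul ((a:ℝ)+1)
  have hi2 := (wehrl_intInt (a+1) b).const_mul ((b:ℝ)+1)
  have hi3 : IntervalIntegrable (fun x : ℝ => x ^ a * (1-x) ^ (b+1)) volume 0 1 :=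
    Continuous.intervalIntegrable (by fun_prop) _ _
  have hcont : ContinuousOn
      (fun p : ℝ => p ^ (a+1) * Real.log p * (1-p) ^ (b+1)) (Icc 0 1) :=
    (wehrl_contOn a).mul (Continuous.continuousOn (by fun_prop))
  have hderiv : ∀ x ∈ Ioo (0:ℝ) 1,
      HasDerivWithinAt (fun p : ℝ => p ^ (a+1) * Real.log p * (1-p) ^ (b+1))
        (((a:ℝ)+1) * (x ^ a * (1-x) ^ (b+1) * Real.log x)
          - ((b:ℝ)+1) * (x ^ (a+1) * (1-x) ^ b * Real.log x)
          + x ^ a * (1-x) ^ (b+1)) (Ioi x) x := by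
    intro x hx
    have hx0 : x ≠ 0 := ne_of_gt hx.1
    have h1 : HasDerivAt (fun p : ℝ => p ^ (a+1) * Real.log p)
        (((a:ℝ)+1) * x ^ a * Real.log x + x ^ (a+1) * x⁻¹) x := by
      have := (hasDerivAt_pow (a+1) x).fun_mul (Real.hasDerivAt_log hx0)
      simpa using this
    have h2 : HasDerivAt (fun p : ℝ => (1 - p) ^ (b+1))
        (((b:ℝ)+1) * (1-x) ^ b * (-1)) x := by
      have := ((hasDerivAt_id x).const_sub 1).fun_pow (b+1)
      simpa using this
    apply HasDerivAt.hasDerivWithinAt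
    have h3 := h1.fun_mul h2
    refine h3.congr_deriv ?_
    rw [pow_succ]
    field_simp
    ring
  have key := intervalIntegral.integral_eq_sub_of_hasDeriv_right_of_le
    (by norm_num : (0:ℝ) ≤ 1) hcont hderiv ((hi1.sub hi2).add hi3)
  rw [intervalIntegral.integral_add (hi1.sub hi2) hi3,
    intervalIntegral.integral_sub hi1 hi2,
    intervalIntegral.integral_const_mul, intervalIntegral.integral_const_mul] at key
  norm_num at key
  linarith

/-- The key integral for the Wehrl entropy of spin states: with `a = j+m` and
`b = j-m` nonnegative integers (so `2j+1 = a+b+1`),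
`-(2j+1)·C(2j, j+m)·∫₀¹ p^(j+m)(1-p)^(j-m) ln p dp = Σ_{n=0}^{j-m} 1/(2j+1-n)`. -/
theorem wehrl_entropy_integral (a b : ℕ) :
    -(((a + b + 1 : ℕ) : ℝ) * ((a + b).choose a : ℝ) *
        ∫ p in (0:ℝ)..1, p ^ a * (1 - p) ^ b * Real.log p) =
      ∑ n ∈ Finset.range (b + 1), 1 / ((a + b + 1 : ℝ) - n) := by
  induction b generalizing a with
  | zero =>
    have h := wehrl_I_base a
    simp only [pow_zero, mul_one, one_div] at h
    rw [Finset.sum_range_one]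
    simp only [Nat.add_zero, Nat.choose_self, Nat.cast_one, mul_one]
    push_cast
    norm_num
    linarith
  | succ b ih =>
    have ha : ((a:ℝ) + 1) ≠ 0 := by positivity
    have hrec := wehrl_I_rec a b
    have hih := ih (a + 1)
    have hbeta := wehrl_beta_val (b+1) a
    have hn := Nat.choose_succ_right_eq (a + b + 1) a
    rw [show a + b + 1 - a = b + 1 from by omega] at hn
    have hnR : ((a+b+1).choose (a+1) : ℝ) * ((a:ℝ)+1) =
        ((a+b+1).choose a : ℝ) * ((b:ℝ)+1) := by exact_mod_cast hn
    rw [show a + (b+1) + 1 = a + b + 1 + 1 from by omega,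
      show a + (b+1) = a + b + 1 from by omega] at hbeta ⊢
    rw [show a + 1 + b + 1 = a + b + 1 + 1 from by omega,
      show a + 1 + b = a + b + 1 from by omega] at hih
    have hI1 : (∫ p in (0:ℝ)..1, p ^ a * (1 - p) ^ (b+1) * Real.log p)
        = (((b:ℝ)+1) * (∫ p in (0:ℝ)..1, p ^ (a+1) * (1-p) ^ b * Real.log p)
            - ∫ p in (0:ℝ)..1, p ^ a * (1-p) ^ (b+1)) / ((a:ℝ)+1) := by
      field_simp
      linarith [hrec]
    have hRHS : (∑ n ∈ Finset.range (b+1+1), 1 / ((a:ℝ) + ((b+1:ℕ):ℝ) + 1 - n))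
        = (∑ n ∈ Finset.range (b+1), 1 / ((((a+1:ℕ)):ℝ) + b + 1 - n)) + 1/((a:ℝ)+1) := by
      rw [Finset.sum_range_succ]
      congr 1
      · exact Finset.sum_congr rfl (fun n _ => by push_cast; ring_nf)
      · push_cast; congr 1; ring
    rw [hRHS, ← hih, hI1]
    push_cast at hbeta hnR ⊢
    field_simp
    linear_combination hbeta +
      ((a:ℝ)+(b:ℝ)+2) *
        (∫ p in (0:ℝ)..1, p ^ (a+1) * (1-p) ^ b * Real.log p) * hnR
end
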